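/- arXiv:2207.07546 — 2 statements merged into one kernel-verified Lean document; each statement's English description precedes it below -/
import Mathlib

section
/- Let $(Q_n, \star)$ be a quandle and let $\rhd$ be the construction-1 operation on $Q_n \times \mathbb{Z}_3$. Then $(Q_n \times \mathbb{Z}_3, \rhd)$ is connected (i.e. for every $A, B \in Q_n \times \mathbb{Z}_3$ there exist finitely many elements $X_1, \dots, X_k \in Q_n \times \mathbb{Z}_3$ with $B = X_1 \rhd (X_2 \rhd (\cdots (X_k \rhd A)))$) if and only if $(Q_n, \star)$ is connected (i.e. for every $a, b \in Q_n$ there exist $x_1, \dots, x_k \in Q_n$ with $b = x_1 \star (x_2 \star (\cdots (x_k \star a)))$). -/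
/-!
The first coordinate of `op1 star` is `star`, so projecting a chain in `Q × ZMod 3` gives a chain
in `Q`. Conversely, lift a chain from `a` to `b` with labels `0`; this reaches `(b, m)` for some
label `m`. Two more steps by `(b, 1)` and then `(b, β)` keep the first coordinate `b` by
idempotency and, whatever `m` is, land on the label `β`.
-/

/-- The construction-1 operation on `Q × ZMod 3`. -/
def op1 {Q : Type*} (star : Q → Q → Q) (X Y : Q × ZMod 3) : Q × ZMod 3 :=
  if (X.2 = 1 ∧ Y.2 = 1) ∨ (X.2 = 0 ∧ Y.2 = 1) then (star X.1 Y.1, X.2 + Y.2 + 2)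
  else if (X.2 = 2 ∧ Y.2 = 2) ∨ (X.2 = 2 ∧ Y.2 = 1) then (star X.1 Y.1, X.2)
  else (star X.1 Y.1, X.2 + Y.2)

/-- A quandle structure: idempotent, right translations bijective, right self-distributive. -/
def IsQuandle {Q : Type*} (star : Q → Q → Q) : Prop :=
  (∀ x, star x x = x) ∧
  (∀ x y, ∃! z, star z y = x) ∧
  (∀ x y z, star (star x y) z = star (star x z) (star y z))

/-- Connectedness: every `b` is reachable from every `a` by finitely many left
translations `b = x₁ ⋆ (x₂ ⋆ (⋯ (xₖ ⋆ a)))`. -/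
def QuandleConnected {Q : Type*} (star : Q → Q → Q) : Prop :=
  ∀ a b : Q, ∃ l : List Q, l ≠ [] ∧ b = l.foldr star a

section

variable {Q : Type*} (star : Q → Q → Q)

def op1Label (a b : ZMod 3) : ZMod 3 :=
  if (a = 1 ∧ b = 1) ∨ (a = 0 ∧ b = 1) then a + b + 2
  else if (a = 2 ∧ b = 2) ∨ (a = 2 ∧ b = 1) then a
  else a + b

lemma op1Label_op1Label_one : ∀ β m : ZMod 3, op1Label β (op1Label 1 m) = β := by decide

lemma op1_eq (X Y : Q × ZMod 3) : op1 star X Y = (star X.1 Y.1, op1Label X.2 Y.2) := by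
  unfold op1 op1Label; split_ifs <;> rfl

lemma op1_fst (X Y : Q × ZMod 3) : (op1 star X Y).1 = star X.1 Y.1 := by
  rw [op1_eq]

lemma foldr_op1_fst (L : List (Q × ZMod 3)) (A : Q × ZMod 3) :
    (L.foldr (op1 star) A).1 = (L.map Prod.fst).foldr star A.1 := by
  induction L with
  | nil => rfl
  | cons X T ih => simp only [List.foldr_cons, List.map_cons, op1_fst, ih]

lemma foldr_op1_map_fst (l : List Q) (A : Q × ZMod 3) (c : ZMod 3) :
    (l.map (·, c) |>.foldr (op1 star) A).1 = l.foldr star A.1 := by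
  rw [foldr_op1_fst, List.map_map]
  exact congrArg (List.foldr star A.1) (List.map_id l)

lemma op1_op1_one_of_idem {b : Q} (hb : star b b = b) (β m : ZMod 3) :
    op1 star (b, β) (op1 star (b, 1) (b, m)) = (b, β) := by
  simp only [op1_eq, hb, op1Label_op1Label_one]

lemma QuandleConnected.of_op1 (h : QuandleConnected (op1 star)) : QuandleConnected star := by
  intro a b
  obtain ⟨L, hL, hab⟩ := h (a, 0) (b, 0)
  exact ⟨L.map Prod.fst, by simpa using hL, by simpa [foldr_op1_fst] using congrArg Prod.fst hab⟩

lemma QuandleConnected.op1_of_idem (hidem : ∀ x, star x x = x) (h : QuandleConnected star) :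
    QuandleConnected (op1 star) := by
  intro A B
  obtain ⟨l, -, hAB⟩ := h A.1 B.1
  obtain ⟨m, hm⟩ : ∃ m, (l.map (·, (0 : ZMod 3))).foldr (op1 star) A = (B.1, m) :=
    ⟨_, Prod.ext (by rw [foldr_op1_map_fst, hAB]) rfl⟩
  refine ⟨B :: (B.1, 1) :: l.map (·, 0), List.cons_ne_nil _ _, ?_⟩
  rw [List.foldr_cons, List.foldr_cons, hm, op1_op1_one_of_idem star (hidem B.1)]

end

theorem construction1_connected_iff {Q : Type*} (star : Q → Q → Q)
    (hq : IsQuandle star) :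
    QuandleConnected (op1 star) ↔ QuandleConnected star :=
  ⟨QuandleConnected.of_op1 star, QuandleConnected.op1_of_idem star hq.1⟩
end

section
/- Let $(Q_4, \cdot)$ be the order-4 quandle of Table 1, let $\rhd_1$ be the construction-1 operation on $Q_4 \times \mathbb{Z}_3$ and let $\rhd_2$ be the construction-2 operation on $Q_4 \times \mathbb{Z}_3$. Then $(Q_4 \times \mathbb{Z}_3, \rhd_1)$ and $(Q_4 \times \mathbb{Z}_3, \rhd_2)$ are non-isomorphic: there is no bijection $f : Q_4 \times \mathbb{Z}_3 \to Q_4 \times \mathbb{Z}_3$ such that $f(X \rhd_1 Y) = f(X) \rhd_2 f(Y)$ for all $X, Y$. -/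
/-- The construction-2 operation on `Q × ZMod 3`. -/
def op2 {Q : Type*} (star : Q → Q → Q) (X Y : Q × ZMod 3) : Q × ZMod 3 :=
  if (X.2 = 1 ∧ Y.2 = 1) ∨ (X.2 = 0 ∧ Y.2 = 1) ∨ (X.2 = 2 ∧ Y.2 = 1) then
    (star X.1 Y.1, X.2 + Y.2 + 2)
  else if (X.2 = 0 ∧ Y.2 = 2) ∨ (X.2 = 1 ∧ Y.2 = 2) then (star X.1 Y.1, X.2 + Y.2 + 1)
  else (star X.1 Y.1, X.2 + Y.2)

/-- The order-4 quandle of Table 1 (elements 1,2,3,4 encoded as 0,1,2,3). -/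
def q4 : Fin 4 → Fin 4 → Fin 4 :=
  ![![0, 0, 1, 1], ![1, 1, 0, 0], ![3, 3, 2, 2], ![2, 2, 3, 3]]

theorem Function.Surjective.self_op_self_of_hom {α β : Type*} {op : α → α → α}
    {op' : β → β → β} {f : α → β} (hf : Function.Surjective f)
    (hmul : ∀ x y, f (op x y) = op' (f x) (f y)) (hidem : ∀ x, op x x = x) (y : β) :
    op' y y = y := by
  obtain ⟨x, rfl⟩ := hf y
  rw [← hmul, hidem]

theorem op1_self {Q : Type*} {star : Q → Q → Q} (hidem : ∀ x, star x x = x)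
    (X : Q × ZMod 3) : op1 star X X = X := by
  obtain ⟨x, a⟩ := X
  obtain rfl | rfl | rfl : a = 0 ∨ a = 1 ∨ a = 2 := by revert a; decide
  all_goals simp +decide [op1, hidem]

theorem op2_self_ne {Q : Type*} (star : Q → Q → Q) (x : Q) :
    op2 star (x, 2) (x, 2) ≠ (x, 2) := by
  simp +decide [op2]

theorem q4_self (x : Fin 4) : q4 x x = x := by
  revert x
  decide

theorem construction1_not_iso_construction2 :
    ¬ ∃ f : Fin 4 × ZMod 3 → Fin 4 × ZMod 3,
        Function.Bijective f ∧ ∀ X Y, f (op1 q4 X Y) = op2 q4 (f X) (f Y) := by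
  rintro ⟨f, hf, hmul⟩
  exact op2_self_ne q4 0 (hf.2.self_op_self_of_hom hmul (op1_self q4_self) _)
end
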